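/- Let ε > 0, Δ > 0, and set b = Δ/ε. Let k be a natural number. For a ∈ ℝ^k, let μ_a denote the product measure on ℝ^k whose i-th factor is the measure on ℝ with density x ↦ (1/(2b))·exp(−|x − a_i|/b) with respect to Lebesgue measure. Then for all a, a' ∈ ℝ^k with ∑_{i=1}^{k} |a_i − a'_i| ≤ Δ and every measurable set Ω ⊆ ℝ^k, one has μ_a(Ω) ≤ exp(ε)·μ_{a'}(Ω). -/

import Mathlib

/-!
Coordinatewise, the triangle inequality `|x - a'ᵢ| ≤ |x - aᵢ| + |aᵢ - a'ᵢ|` bounds the Laplace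
density centred at `aᵢ` by `exp (|aᵢ - a'ᵢ| / b)` times the one centred at `a'ᵢ`. A finite product
of measures is monotone in each factor and pulls out scalar factors, so `μ_a ≤ c • μ_{a'}` with
`c = exp (∑ᵢ |aᵢ - a'ᵢ| / b) ≤ exp (Δ / b) = exp ε`.
-/

open MeasureTheory Real

/-- The product measure on `ℝ^k` whose `i`-th factor is the Laplace measure with
scale `b` centered at `a i`. -/
noncomputable def laplaceMechanism (k : ℕ) (b : ℝ) (a : Fin k → ℝ) : Measure (Fin k → ℝ) :=
  Measure.pi (fun i =>
    volume.withDensity (fun x => ENNReal.ofReal ((1 / (2 * b)) * Real.exp (-|x - a i| / b))))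

open scoped NNReal ENNReal

namespace MeasureTheory.Measure

theorem pi_fin_mono : ∀ {n : ℕ} {α : Fin n → Type*} [∀ i, MeasurableSpace (α i)]
    {μ ν : ∀ i, Measure (α i)} [∀ i, SigmaFinite (μ i)] [∀ i, SigmaFinite (ν i)],
    (∀ i, μ i ≤ ν i) → Measure.pi μ ≤ Measure.pi ν
  | 0, _, _, μ, ν, _, _, _ => by rw [pi_of_empty μ, pi_of_empty ν]
  | n + 1, α, _, μ, ν, _, _, h => by
    rw [← (measurePreserving_piFinSuccAbove μ 0).symm.map_eq,
      ← (measurePreserving_piFinSuccAbove ν 0).symm.map_eq]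
    exact map_mono (prod_mono (h 0) (pi_fin_mono fun j => h _)) (MeasurableEquiv.measurable _)

theorem pi_mono {ι : Type*} [Fintype ι] {α : ι → Type*} [∀ i, MeasurableSpace (α i)]
    {μ ν : ∀ i, Measure (α i)} [∀ i, SigmaFinite (μ i)] [∀ i, SigmaFinite (ν i)]
    (h : ∀ i, μ i ≤ ν i) : Measure.pi μ ≤ Measure.pi ν := by
  let e := (Fintype.equivFin ι).symm
  rw [← (measurePreserving_piCongrLeft μ e).map_eq, ← (measurePreserving_piCongrLeft ν e).map_eq]
  exact map_mono (pi_fin_mono fun i => h (e i)) (MeasurableEquiv.measurable _)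

theorem pi_smul {ι : Type*} [Fintype ι] {α : ι → Type*} [∀ i, MeasurableSpace (α i)]
    (μ : ∀ i, Measure (α i)) [∀ i, SigmaFinite (μ i)] (c : ι → ℝ≥0) :
    Measure.pi (fun i => (c i • μ i : Measure (α i))) = (∏ i, c i) • Measure.pi μ := by
  refine pi_eq fun s _ => ?_
  simp only [smul_apply, pi_pi, Finset.prod_mul_distrib, ENNReal.smul_def, smul_eq_mul,
    ENNReal.ofNNReal_finsetProd]

end MeasureTheory.Measure

noncomputable def laplaceMeasure (b m : ℝ) : Measure ℝ :=
  volume.withDensity fun x => ENNReal.ofReal ((1 / (2 * b)) * Real.exp (-|x - m| / b))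

instance (b m : ℝ) : SigmaFinite (laplaceMeasure b m) := by
  unfold laplaceMeasure; infer_instance

theorem laplaceMechanism_eq_pi (k : ℕ) (b : ℝ) (a : Fin k → ℝ) :
    laplaceMechanism k b a = Measure.pi fun i => laplaceMeasure b (a i) := rfl

theorem laplace_density_le {b : ℝ} (hb : 0 < b) (m m' x : ℝ) :
    1 / (2 * b) * exp (-|x - m| / b) ≤
      exp (|m - m'| / b) * (1 / (2 * b) * exp (-|x - m'| / b)) := by
  rw [mul_left_comm, ← exp_add, ← add_div]
  gcongr
  linarith [abs_sub_le x m m']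

theorem laplaceMeasure_le_smul {b : ℝ} (hb : 0 < b) (m m' : ℝ) :
    laplaceMeasure b m ≤ (exp (|m - m'| / b)).toNNReal • laplaceMeasure b m' := by
  rw [laplaceMeasure, laplaceMeasure, ENNReal.smul_def, ← withDensity_smul' _ _ ENNReal.coe_ne_top]
  refine withDensity_mono (Filter.Eventually.of_forall fun x => ?_)
  rw [Pi.smul_apply, smul_eq_mul, ENNReal.ofNNReal_toNNReal, ← ENNReal.ofReal_mul (exp_pos _).le]
  exact ENNReal.ofReal_le_ofReal (laplace_density_le hb m m' x)

theorem laplace_mechanism_dp_general (ε Δ : ℝ) (hε : 0 < ε) (hΔ : 0 < Δ) (b : ℝ) (hb : b = Δ / ε)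
    (k : ℕ) (a a' : Fin k → ℝ) (hsens : ∑ i : Fin k, |a i - a' i| ≤ Δ)
    (Ω : Set (Fin k → ℝ)) :
    laplaceMechanism k b a Ω ≤ ENNReal.ofReal (Real.exp ε) * laplaceMechanism k b a' Ω := by
  have hb_pos : 0 < b := hb ▸ div_pos hΔ hε
  have hscale :
      ((∏ i, (exp (|a i - a' i| / b)).toNNReal : ℝ≥0) : ℝ≥0∞) ≤ ENNReal.ofReal (exp ε) := by
    rw [← Real.toNNReal_prod_of_nonneg fun i _ => (exp_pos _).le, ← exp_sum, ← Finset.sum_div,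
      ENNReal.ofNNReal_toNNReal]
    refine ENNReal.ofReal_le_ofReal (exp_le_exp.2 ?_)
    rwa [div_le_iff₀ hb_pos, hb, mul_div_cancel₀ _ hε.ne']
  calc laplaceMechanism k b a Ω
      ≤ ((∏ i, (exp (|a i - a' i| / b)).toNNReal) • laplaceMechanism k b a') Ω := by
        rw [laplaceMechanism_eq_pi, laplaceMechanism_eq_pi, ← Measure.pi_smul]
        exact Measure.pi_mono (fun i => laplaceMeasure_le_smul hb_pos _ _) Ω
    _ ≤ ENNReal.ofReal (Real.exp ε) * laplaceMechanism k b a' Ω := by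
        rw [Measure.smul_apply, ENNReal.smul_def, smul_eq_mul]
        gcongr

theorem laplace_mechanism_dp (ε Δ : ℝ) (hε : 0 < ε) (hΔ : 0 < Δ) (b : ℝ) (hb : b = Δ / ε)
    (k : ℕ) (a a' : Fin k → ℝ) (hsens : ∑ i : Fin k, |a i - a' i| ≤ Δ)
    (Ω : Set (Fin k → ℝ)) (hΩ : MeasurableSet Ω) :
    laplaceMechanism k b a Ω ≤ ENNReal.ofReal (Real.exp ε) * laplaceMechanism k b a' Ω :=
  laplace_mechanism_dp_general ε Δ hε hΔ b hb k a a' hsens Ω
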